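/- With the test function F = F_{τ1,τ2,X1,X2,R1,R2}, for all A1, A2 > 0 such that A1²·A2 ≤ 1/(2·X1²·X2) or A1·A2 ≤ 1/(2·X1·X2), one has 𝒥_{w0,F}(A1, A2) = 0. -/

import Mathlib

open MeasureTheory

noncomputable section

/-- `e(x) = exp(2πix)`. -/
def e (x : ℝ) : ℂ := Complex.exp (2 * Real.pi * Complex.I * (x : ℂ))

/-- `ξ_{w0,1}` in coordinates `(x1, x2, x4, x5)`. -/
def ξw1 (x1 x2 x4 x5 : ℝ) : ℝ :=
  (x4 ^ 2 + x1 * x4 * x5 - x2 * x5) ^ 2 + (x1 * x4 - x2) ^ 2 + 2 * x4 ^ 2 + x5 ^ 2 + 1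

/-- `ξ_{w0,2}`. -/
def ξw2 (x1 x2 x4 x5 : ℝ) : ℝ := (x1 * x5 + x4) ^ 2 + x1 ^ 2 + x2 ^ 2 + 1

/-- `ζ_{w0,1}`. -/
def ζw1 (x1 x2 x4 x5 : ℝ) : ℝ := -(x1 * x5 ^ 2 + x2 * x4 + x4 * x5 + x1)

/-- `ζ_{w0,2}`. -/
def ζw2 (x1 x2 x4 x5 : ℝ) : ℝ :=
  x1 ^ 3 * x4 * x5 ^ 2 + 2 * x1 ^ 2 * x4 ^ 2 * x5 - x1 ^ 2 * x2 * x5 ^ 2 +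
    x1 ^ 3 * x4 + x1 * x4 ^ 3 - x1 ^ 2 * x2 + x2 * x4 ^ 2 - x2 ^ 2 * x5 +
    2 * x1 * x4 - x5

/-- The integrand of the inner `ℝ⁴`-integral of `𝒥_{w0,F}`. -/
def Jw0Integrand (F : ℝ → ℝ → ℂ) (A1 A2 y1 y2 x1 x2 x4 x5 : ℝ) : ℂ :=
  e (A1 * ζw1 x1 x2 x4 x5 / (ξw2 x1 x2 x4 x5 * y1)) *
  e (A2 * ζw2 x1 x2 x4 x5 / (ξw1 x1 x2 x4 x5 * y2)) *
  e (-(A1 * x1 * y1) - A2 * x5 * y2) *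
  F (A1 * Real.sqrt (ξw1 x1 x2 x4 x5) / (ξw2 x1 x2 x4 x5 * y1))
    (A2 * ξw2 x1 x2 x4 x5 / (ξw1 x1 x2 x4 x5 * y2)) *
  (starRingEnd ℂ) (F (A1 * y1) (A2 * y2))

/-- The arithmetic transform `𝒥_{w0,F}(A1, A2)`. -/
def Jw0 (F : ℝ → ℝ → ℂ) (A1 A2 : ℝ) : ℂ :=
  ((A1 : ℂ) ^ 4)⁻¹ * ((A2 : ℂ) ^ 3)⁻¹ *
    ∫ y in Set.Ioi (0 : ℝ) ×ˢ Set.Ioi (0 : ℝ),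
      (∫ x : ℝ × ℝ × ℝ × ℝ, Jw0Integrand F A1 A2 y.1 y.2 x.1 x.2.1 x.2.2.1 x.2.2.2) /
        ((y.1 : ℂ) * (y.2 : ℂ))

/-- The normalising factor `ℛ = R1·R2·(R1+R2)·(R2−R1+1)`. -/
def Rfac (R1 R2 : ℝ) : ℝ := R1 * R2 * (R1 + R2) * (R2 - R1 + 1)

/-- The test function `F_{τ1,τ2,X1,X2,R1,R2}`. -/
def Ftest (f : ℝ → ℝ) (τ1 τ2 X1 X2 R1 R2 : ℝ) (y1 y2 : ℝ) : ℂ :=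
  (Real.sqrt (Rfac R1 R2) : ℂ) * (f (X1 * y1) : ℂ) * (f (X2 * y2) : ℂ) *
    (y1 : ℂ) ^ (Complex.I * ((τ1 : ℂ) + (τ2 : ℂ))) *
    (y2 : ℂ) ^ (Complex.I * (τ2 : ℂ))

lemma one_le_ξw1 (x1 x2 x4 x5 : ℝ) : 1 ≤ ξw1 x1 x2 x4 x5 := by
  unfold ξw1
  nlinarith [sq_nonneg (x4 ^ 2 + x1 * x4 * x5 - x2 * x5), sq_nonneg (x1 * x4 - x2),
    sq_nonneg x4, sq_nonneg x5]

lemma one_le_ξw2 (x1 x2 x4 x5 : ℝ) : 1 ≤ ξw2 x1 x2 x4 x5 := by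
  unfold ξw2
  nlinarith [sq_nonneg (x1 * x5 + x4), sq_nonneg x1, sq_nonneg x2]

lemma aux_sq_contr (P : ℝ) (h0 : 0 < P) (h1 : 1 ≤ P ^ 2) (h2 : P ≤ 1 / 2) : False := by
  nlinarith

lemma key_ineq (X1 X2 A1 A2 y1 y2 S1 s2 : ℝ)
    (hy1 : 0 < y1) (hy2 : 0 < y2) (hA1 : 0 < A1) (hA2 : 0 < A2)
    (hX1 : 1 ≤ X1) (hX2 : 1 ≤ X2) (hS1 : 1 ≤ S1) (hs2 : 1 ≤ s2)
    (h1 : 1 ≤ X1 * (A1 * y1)) (h2 : 1 ≤ X1 * (A1 * S1 / (s2 * y1)))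
    (h3 : 1 ≤ X2 * (A2 * y2)) (h4 : 1 ≤ X2 * (A2 * s2 / (S1 ^ 2 * y2)))
    (hAle : A1 ^ 2 * A2 ≤ 1 / (2 * X1 ^ 2 * X2) ∨ A1 * A2 ≤ 1 / (2 * X1 * X2)) :
    False := by
  have hS0 : (0:ℝ) < S1 := lt_of_lt_of_le one_pos hS1
  have hs0 : (0:ℝ) < s2 := lt_of_lt_of_le one_pos hs2
  have e2 : s2 * y1 ≤ X1 * A1 * S1 := by
    have hpos : 0 < s2 * y1 := mul_pos hs0 hy1
    rw [show X1 * (A1 * S1 / (s2 * y1)) = X1 * A1 * S1 / (s2 * y1) by ring,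
      le_div_iff₀ hpos] at h2
    linarith
  have e4 : S1 ^ 2 * y2 ≤ X2 * A2 * s2 := by
    have hpos : 0 < S1 ^ 2 * y2 := mul_pos (by positivity) hy2
    rw [show X2 * (A2 * s2 / (S1 ^ 2 * y2)) = X2 * A2 * s2 / (S1 ^ 2 * y2) by ring,
      le_div_iff₀ hpos] at h4
    linarith
  -- s2 ≤ X1² A1² S1
  have t2 : s2 ≤ X1 ^ 2 * A1 ^ 2 * S1 := by
    have := mul_le_mul e2 h1 zero_le_one (by positivity : (0:ℝ) ≤ X1 * A1 * S1)
    nlinarith [hy1]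
  -- S1² ≤ X2² A2² s2
  have t4 : S1 ^ 2 ≤ X2 ^ 2 * A2 ^ 2 * s2 := by
    have := mul_le_mul e4 h3 zero_le_one (by positivity : (0:ℝ) ≤ X2 * A2 * s2)
    nlinarith [hy2]
  rcases hAle with hle | hle
  · have hc : 0 < 2 * X1 ^ 2 * X2 := by positivity
    have hA : A1 ^ 2 * A2 * (2 * X1 ^ 2 * X2) ≤ 1 := (le_div_iff₀ hc).mp hle
    have q : s2 * s2 ≤ (X1 ^ 2 * A1 ^ 2 * S1) * (X1 ^ 2 * A1 ^ 2 * S1) :=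
      mul_self_le_mul_self (le_of_lt hs0) t2
    have r2 : s2 * s2 ≤ X1 ^ 4 * A1 ^ 4 * (X2 ^ 2 * A2 ^ 2 * s2) := by
      have h := mul_le_mul_of_nonneg_left t4 (by positivity : (0:ℝ) ≤ X1 ^ 4 * A1 ^ 4)
      calc s2 * s2 ≤ (X1 ^ 2 * A1 ^ 2 * S1) * (X1 ^ 2 * A1 ^ 2 * S1) := q
        _ = X1 ^ 4 * A1 ^ 4 * S1 ^ 2 := by ring
        _ ≤ X1 ^ 4 * A1 ^ 4 * (X2 ^ 2 * A2 ^ 2 * s2) := h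
    have r3 : s2 ≤ X1 ^ 4 * A1 ^ 4 * (X2 ^ 2 * A2 ^ 2) := by
      nlinarith [r2, hs0]
    exact aux_sq_contr (X1 ^ 2 * A1 ^ 2 * X2 * A2) (by positivity)
      (by nlinarith [r3, hs2, sq_nonneg (X1 ^ 2 * A1 ^ 2 * X2 * A2)]) (by linarith [hA])
  · have hc : 0 < 2 * X1 * X2 := by positivity
    have hA : A1 * A2 * (2 * X1 * X2) ≤ 1 := (le_div_iff₀ hc).mp hle
    have r2 : S1 ^ 2 ≤ X2 ^ 2 * A2 ^ 2 * (X1 ^ 2 * A1 ^ 2 * S1) := by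
      have h := mul_le_mul_of_nonneg_left t2 (by positivity : (0:ℝ) ≤ X2 ^ 2 * A2 ^ 2)
      calc S1 ^ 2 ≤ X2 ^ 2 * A2 ^ 2 * s2 := t4
        _ ≤ X2 ^ 2 * A2 ^ 2 * (X1 ^ 2 * A1 ^ 2 * S1) := h
    have r3 : S1 ≤ X2 ^ 2 * A2 ^ 2 * (X1 ^ 2 * A1 ^ 2) := by
      nlinarith [r2, hS0]
    exact aux_sq_contr (X1 * A1 * X2 * A2) (by positivity)
      (by linarith [r3, hS1]) (by linarith [hA])

/-- vanishing of `𝒥_{w0,F}(A1, A2)` for small `A1, A2`. -/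
theorem Jw0_vanishing (f : ℝ → ℝ) (hf_smooth : ContDiff ℝ (⊤ : ℕ∞) f)
    (hf_range : ∀ y, f y ∈ Set.Icc (0:ℝ) 1)
    (hf_supp : tsupport f ⊆ Set.Icc 1 2) (hf_ne : f ≠ 0)
    (τ1 τ2 X1 X2 R1 R2 : ℝ) (hτ1 : 0 ≤ τ1) (hτ2 : 0 ≤ τ2)
    (hX1 : 1 ≤ X1) (hX2 : 1 ≤ X2) (hR1 : 1 ≤ R1) (hR12 : R1 ≤ R2)
    (A1 A2 : ℝ) (hA1 : 0 < A1) (hA2 : 0 < A2)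
    (hAle : A1 ^ 2 * A2 ≤ 1 / (2 * X1 ^ 2 * X2) ∨ A1 * A2 ≤ 1 / (2 * X1 * X2)) :
    Jw0 (Ftest f τ1 τ2 X1 X2 R1 R2) A1 A2 = 0 := by
  have hmem : ∀ t : ℝ, f t ≠ 0 → t ∈ Set.Icc (1:ℝ) 2 := fun t ht =>
    hf_supp (subset_tsupport f (Function.mem_support.mpr ht))
  have hzero : ∀ y1 y2 x1 x2 x4 x5 : ℝ, 0 < y1 → 0 < y2 →
      Jw0Integrand (Ftest f τ1 τ2 X1 X2 R1 R2) A1 A2 y1 y2 x1 x2 x4 x5 = 0 := by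
    intro y1 y2 x1 x2 x4 x5 hy1 hy2
    set s1 := ξw1 x1 x2 x4 x5 with hs1def
    set s2 := ξw2 x1 x2 x4 x5 with hs2def
    have hs1 : 1 ≤ s1 := one_le_ξw1 x1 x2 x4 x5
    have hs2 : 1 ≤ s2 := one_le_ξw2 x1 x2 x4 x5
    have hS1 : 1 ≤ Real.sqrt s1 := Real.one_le_sqrt.mpr hs1
    have hsq : Real.sqrt s1 ^ 2 = s1 := Real.sq_sqrt (by linarith)
    by_cases hc1 : f (X1 * (A1 * y1)) = 0
    · simp [Jw0Integrand, Ftest, hc1]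
    by_cases hc2 : f (X2 * (A2 * y2)) = 0
    · simp [Jw0Integrand, Ftest, hc2]
    by_cases hc3 : f (X1 * (A1 * Real.sqrt s1 / (s2 * y1))) = 0
    · rw [hs1def, hs2def] at hc3; simp [Jw0Integrand, Ftest, hc3]
    by_cases hc4 : f (X2 * (A2 * s2 / (s1 * y2))) = 0
    · rw [hs1def, hs2def] at hc4; simp [Jw0Integrand, Ftest, hc4]
    exact (key_ineq X1 X2 A1 A2 y1 y2 (Real.sqrt s1) s2
      hy1 hy2 hA1 hA2 hX1 hX2 hS1 hs2
      (hmem _ hc1).1 (hmem _ hc3).1 (hmem _ hc2).1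
      (by rw [hsq]; exact (hmem _ hc4).1) hAle).elim
  have hset : (∫ y in Set.Ioi (0 : ℝ) ×ˢ Set.Ioi (0 : ℝ),
      (∫ x : ℝ × ℝ × ℝ × ℝ, Jw0Integrand (Ftest f τ1 τ2 X1 X2 R1 R2) A1 A2 y.1 y.2
        x.1 x.2.1 x.2.2.1 x.2.2.2) / ((y.1 : ℂ) * (y.2 : ℂ))) = 0 := by
    apply setIntegral_eq_zero_of_forall_eq_zero
    intro y hy
    have hy1 : 0 < y.1 := hy.1
    have hy2 : 0 < y.2 := hy.2
    have : (fun x : ℝ × ℝ × ℝ × ℝ =>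
        Jw0Integrand (Ftest f τ1 τ2 X1 X2 R1 R2) A1 A2 y.1 y.2 x.1 x.2.1 x.2.2.1 x.2.2.2)
        = fun _ => (0 : ℂ) :=
      funext fun x => hzero y.1 y.2 x.1 x.2.1 x.2.2.1 x.2.2.2 hy1 hy2
    rw [this, integral_zero, zero_div]
  rw [Jw0, hset, mul_zero]

end
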